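/- Let g ≥ 1, let τ ∈ H_g, and let p = (A B; 0 (Aᵀ)⁻¹) ∈ P_g(ℂ), i.e. A ∈ GL_g(ℂ) and ABᵀ = BAᵀ. Then the block matrix δ := (Aᵀ −Aᵀτ; −2πi·Bᵀ A⁻¹ + 2πi·Bᵀτ) belongs to Sp_{2g}(ℂ), its lower blocks satisfy j(δ,τ) = A⁻¹ (in particular j(δ,τ) is invertible, so τ ∈ U_δ), and p_{δ,τ} = p. -/

import Mathlib

/-!
Writing `c = 2πi`, the matrix `δ` factors as the Levi-type block `(Aᵀ 0; -c Bᵀ A⁻¹)` times the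
unipotent block `(1 -τ; 0 1)`. The first is symplectic because `A Bᵀ` is symmetric, the second
because `τ` is; the lower row of `δ` then gives `j(δ, τ) = A⁻¹`, from which `p_{δ,τ}` is read off.
-/

open Matrix

noncomputable section

/-- The standard symplectic matrix `J = (0 1; −1 0)` in `g × g` block form. -/
def Jm (R : Type*) [CommRing R] (g : ℕ) :
    Matrix (Fin g ⊕ Fin g) (Fin g ⊕ Fin g) R :=
  fromBlocks 0 1 (-1) 0

/-- The complex symplectic group `Sp_{2g}(ℂ)` as a set of matrices. -/
def SpSet (g : ℕ) : Set (Matrix (Fin g ⊕ Fin g) (Fin g ⊕ Fin g) ℂ) :=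
  {M | M * Jm ℂ g * Mᵀ = Jm ℂ g}

/-- The Siegel upper half-space `H_g`. -/
def SiegelUpperHalf (g : ℕ) : Set (Matrix (Fin g) (Fin g) ℂ) :=
  {τ | τᵀ = τ ∧ (τ.map Complex.im).PosDef}

/-- The automorphy factor `j(σ, τ) = Cτ + D` for `σ = (A B; C D)`. -/
def jmat {g : ℕ} (σ : Matrix (Fin g ⊕ Fin g) (Fin g ⊕ Fin g) ℂ)
    (τ : Matrix (Fin g) (Fin g) ℂ) : Matrix (Fin g) (Fin g) ℂ :=
  σ.toBlocks₂₁ * τ + σ.toBlocks₂₂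

/-- The element `p_{σ,τ} = ((Cτ+D)⁻¹ −(2πi)⁻¹Cᵀ; 0 (Cτ+D)ᵀ)` of the Siegel
parabolic. -/
noncomputable def pdt {g : ℕ} (σ : Matrix (Fin g ⊕ Fin g) (Fin g ⊕ Fin g) ℂ)
    (τ : Matrix (Fin g) (Fin g) ℂ) : Matrix (Fin g ⊕ Fin g) (Fin g ⊕ Fin g) ℂ :=
  fromBlocks (jmat σ τ)⁻¹
    (-((2 * (Real.pi : ℂ) * Complex.I)⁻¹ • (σ.toBlocks₂₁)ᵀ))
    0 (jmat σ τ)ᵀ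

namespace SymplecticGroup

variable {l R : Type*} [DecidableEq l] [Fintype l] [CommRing R]

theorem fromBlocks_zero₁₂_mem_iff {P C Q : Matrix l l R} :
    fromBlocks P 0 C Q ∈ symplecticGroup l R ↔ Pᵀ * C = Cᵀ * P ∧ Pᵀ * Q = 1 := by
  simp [fromBlocks_mem_iff]

theorem fromBlocks_one_zero_one_mem_iff {X : Matrix l l R} :
    fromBlocks 1 X 0 1 ∈ symplecticGroup l R ↔ Xᵀ = X := by
  simp [fromBlocks_mem_iff]

end SymplecticGroup

theorem Jm_eq_neg_J (R : Type*) [CommRing R] (g : ℕ) : Jm R g = -J (Fin g) R := by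
  simp [Jm, J, fromBlocks_neg]

theorem mem_SpSet_iff {g : ℕ} {M : Matrix (Fin g ⊕ Fin g) (Fin g ⊕ Fin g) ℂ} :
    M ∈ SpSet g ↔ M ∈ symplecticGroup (Fin g) ℂ := by
  simp [SpSet, SymplecticGroup.mem_iff, Jm_eq_neg_J]

theorem statement13_general (g : ℕ)
    (τ : Matrix (Fin g) (Fin g) ℂ) (hτ : τ ∈ SiegelUpperHalf g)
    (A B : Matrix (Fin g) (Fin g) ℂ) (hA : IsUnit A.det)
    (hAB : A * Bᵀ = B * Aᵀ) :
    fromBlocks Aᵀ (-(Aᵀ * τ))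
        (-((2 * (Real.pi : ℂ) * Complex.I) • Bᵀ))
        (A⁻¹ + (2 * (Real.pi : ℂ) * Complex.I) • (Bᵀ * τ)) ∈ SpSet g ∧
    jmat (fromBlocks Aᵀ (-(Aᵀ * τ))
        (-((2 * (Real.pi : ℂ) * Complex.I) • Bᵀ))
        (A⁻¹ + (2 * (Real.pi : ℂ) * Complex.I) • (Bᵀ * τ))) τ = A⁻¹ ∧
    IsUnit (jmat (fromBlocks Aᵀ (-(Aᵀ * τ))
        (-((2 * (Real.pi : ℂ) * Complex.I) • Bᵀ))
        (A⁻¹ + (2 * (Real.pi : ℂ) * Complex.I) • (Bᵀ * τ))) τ).det ∧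
    pdt (fromBlocks Aᵀ (-(Aᵀ * τ))
        (-((2 * (Real.pi : ℂ) * Complex.I) • Bᵀ))
        (A⁻¹ + (2 * (Real.pi : ℂ) * Complex.I) • (Bᵀ * τ))) τ =
      fromBlocks A B 0 (Aᵀ)⁻¹ := by
  set c : ℂ := 2 * (Real.pi : ℂ) * Complex.I
  have hc : c ≠ 0 := by simp [c, Real.pi_ne_zero, Complex.I_ne_zero]
  have hj : jmat (fromBlocks Aᵀ (-(Aᵀ * τ)) (-(c • Bᵀ)) (A⁻¹ + c • (Bᵀ * τ))) τ = A⁻¹ := by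
    simp [jmat, add_comm]
  have factor : fromBlocks Aᵀ (-(Aᵀ * τ)) (-(c • Bᵀ)) (A⁻¹ + c • (Bᵀ * τ)) =
      fromBlocks Aᵀ 0 (-(c • Bᵀ)) A⁻¹ * fromBlocks 1 (-τ) 0 1 := by
    simp [fromBlocks_multiply, add_comm]
  have levi_mem : fromBlocks Aᵀ 0 (-(c • Bᵀ)) A⁻¹ ∈ symplecticGroup (Fin g) ℂ :=
    SymplecticGroup.fromBlocks_zero₁₂_mem_iff.2
      ⟨by simp [hAB], by simpa using mul_nonsing_inv A hA⟩
  have unipotent_mem : fromBlocks 1 (-τ) 0 1 ∈ symplecticGroup (Fin g) ℂ :=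
    SymplecticGroup.fromBlocks_one_zero_one_mem_iff.2 (by simp [hτ.1])
  refine ⟨?_, hj, hj.symm ▸ isUnit_nonsing_inv_det A hA, ?_⟩
  · rw [mem_SpSet_iff, factor]
    exact mul_mem levi_mem unipotent_mem
  · rw [pdt, hj, nonsing_inv_nonsing_inv A hA, transpose_nonsing_inv]
    simp only [toBlocks_fromBlocks₂₁, transpose_neg, transpose_smul, transpose_transpose, smul_neg,
      neg_neg, smul_smul]
    rw [inv_mul_cancel₀ hc, one_smul]

/-- given `τ ∈ H_g` and `p = (A B; 0 (Aᵀ)⁻¹) ∈ P_g(ℂ)`, the matrix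
`δ = (Aᵀ −Aᵀτ; −2πi·Bᵀ A⁻¹ + 2πi·Bᵀτ)` is symplectic, satisfies `j(δ,τ) = A⁻¹`
(so `j(δ,τ)` is invertible, i.e. `τ ∈ U_δ`), and `p_{δ,τ} = p`. -/
theorem statement13 (g : ℕ) (hg : 1 ≤ g)
    (τ : Matrix (Fin g) (Fin g) ℂ) (hτ : τ ∈ SiegelUpperHalf g)
    (A B : Matrix (Fin g) (Fin g) ℂ) (hA : IsUnit A.det)
    (hAB : A * Bᵀ = B * Aᵀ) :
    fromBlocks Aᵀ (-(Aᵀ * τ))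
        (-((2 * (Real.pi : ℂ) * Complex.I) • Bᵀ))
        (A⁻¹ + (2 * (Real.pi : ℂ) * Complex.I) • (Bᵀ * τ)) ∈ SpSet g ∧
    jmat (fromBlocks Aᵀ (-(Aᵀ * τ))
        (-((2 * (Real.pi : ℂ) * Complex.I) • Bᵀ))
        (A⁻¹ + (2 * (Real.pi : ℂ) * Complex.I) • (Bᵀ * τ))) τ = A⁻¹ ∧
    IsUnit (jmat (fromBlocks Aᵀ (-(Aᵀ * τ))
        (-((2 * (Real.pi : ℂ) * Complex.I) • Bᵀ))
        (A⁻¹ + (2 * (Real.pi : ℂ) * Complex.I) • (Bᵀ * τ))) τ).det ∧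
    pdt (fromBlocks Aᵀ (-(Aᵀ * τ))
        (-((2 * (Real.pi : ℂ) * Complex.I) • Bᵀ))
        (A⁻¹ + (2 * (Real.pi : ℂ) * Complex.I) • (Bᵀ * τ))) τ =
      fromBlocks A B 0 (Aᵀ)⁻¹ :=
  statement13_general g τ hτ A B hA hAB
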